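/- arXiv:2411.13976 — 2 statements merged into one kernel-verified Lean document; each statement's English description precedes it below -/
import Mathlib

section
/- Let F : [0, T) → ℝ be twice differentiable with F(t) > 0, and suppose for some σ > 0 that F(t)F''(t) - (σ+1)(F'(t))² ≥ 0 on [0,T) and F'(0) > 0. Then G(t) = F(t)^{-σ} is concave on [0,T), G'(0) < 0, and G(t) ≤ G(0) + t·G'(0) for all t ∈ [0,T). -/
theorem stmt8 (F F' F'' : ℝ → ℝ) (T σ : ℝ) (hσ : 0 < σ) (hT : 0 < T)
    (hFpos : ∀ t ∈ Set.Ico (0:ℝ) T, 0 < F t)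
    (hF' : ∀ t ∈ Set.Ico (0:ℝ) T, HasDerivAt F (F' t) t)
    (hF'' : ∀ t ∈ Set.Ico (0:ℝ) T, HasDerivAt F' (F'' t) t)
    (hQ : ∀ t ∈ Set.Ico (0:ℝ) T, 0 ≤ F t * F'' t - (σ + 1) * (F' t)^2)
    (hF'0 : 0 < F' 0) :
    ConcaveOn ℝ (Set.Ico (0:ℝ) T) (fun t => F t ^ (-σ)) ∧
    -σ * F 0 ^ (-(σ + 1)) * F' 0 < 0 ∧
    ∀ t ∈ Set.Ico (0:ℝ) T,
      F t ^ (-σ) ≤ F 0 ^ (-σ) + t * (-σ * F 0 ^ (-(σ + 1)) * F' 0) := by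
  set D : Set ℝ := Set.Ico (0:ℝ) T with hD
  have h0 : (0:ℝ) ∈ D := ⟨le_refl 0, hT⟩
  have hint : interior D = Set.Ioo (0:ℝ) T := interior_Ico
  have hsub : Set.Ioo (0:ℝ) T ⊆ D := Set.Ioo_subset_Ico_self
  set G : ℝ → ℝ := fun t => F t ^ (-σ) with hG
  set G' : ℝ → ℝ := fun t => F' t * (-σ) * F t ^ (-σ - 1) with hG'
  set G'' : ℝ → ℝ := fun t =>
    F'' t * (-σ) * F t ^ (-σ - 1) + (F' t * (-σ)) * (F' t * (-σ - 1) * F t ^ (-σ - 1 - 1)) with hG''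
  -- derivative facts
  have hGd : ∀ t ∈ D, HasDerivAt G (G' t) t := fun t ht =>
    (hF' t ht).rpow_const (Or.inl (hFpos t ht).ne')
  have hG'd : ∀ t ∈ D, HasDerivAt G' (G'' t) t := by
    intro t ht
    have h1 : HasDerivAt (fun s => F s ^ (-σ - 1)) (F' t * (-σ - 1) * F t ^ (-σ - 1 - 1)) t :=
      (hF' t ht).rpow_const (Or.inl (hFpos t ht).ne')
    exact ((hF'' t ht).mul_const (-σ)).mul h1
  -- second derivative nonpositive
  have hG''le : ∀ t ∈ D, G'' t ≤ 0 := by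
    intro t ht
    have hFt := hFpos t ht
    have hQt := hQ t ht
    have hpow : F t ^ (-σ - 1) = F t ^ (-σ - 1 - 1) * F t := by
      have h := Real.rpow_add hFt (-σ - 1 - 1) 1
      rw [Real.rpow_one] at h
      rw [← h]
      congr 1
      ring
    have hppos : 0 < F t ^ (-σ - 1 - 1) := Real.rpow_pos_of_pos hFt _
    have : G'' t = -(σ * F t ^ (-σ - 1 - 1)) * (F t * F'' t - (σ + 1) * (F' t)^2)
        - σ * F t ^ (-σ - 1 - 1) * ((σ + 1) * (F' t)^2) + (σ + 1) * σ * F t ^ (-σ - 1 - 1) * (F' t)^2 := by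
      simp only [hG'', hpow]; ring
    rw [this]
    have h1 : -(σ * F t ^ (-σ - 1 - 1)) * (F t * F'' t - (σ + 1) * (F' t)^2) ≤ 0 := by
      apply mul_nonpos_of_nonpos_of_nonneg _ hQt
      nlinarith
    nlinarith
  -- concavity
  have hGcont : ContinuousOn G D := fun t ht => (hGd t ht).continuousAt.continuousWithinAt
  have hG'cont : ContinuousOn G' D := fun t ht => (hG'd t ht).continuousAt.continuousWithinAt
  have hconc : ConcaveOn ℝ D G := by
    apply concaveOn_of_hasDerivWithinAt2_nonpos (convex_Ico 0 T) hGcont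
    · intro x hx
      exact ((hGd x (hsub (hint ▸ hx))).hasDerivWithinAt)
    · intro x hx
      exact ((hG'd x (hsub (hint ▸ hx))).hasDerivWithinAt)
    · intro x hx
      exact hG''le x (hsub (hint ▸ hx))
  -- G' antitone
  have hanti : AntitoneOn G' D := by
    apply antitoneOn_of_hasDerivWithinAt_nonpos (convex_Ico 0 T) hG'cont
    · intro x hx
      exact (hG'd x (hsub (hint ▸ hx))).hasDerivWithinAt
    · intro x hx
      exact hG''le x (hsub (hint ▸ hx))
  have hG'0eq : G' 0 = -σ * F 0 ^ (-(σ + 1)) * F' 0 := by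
    simp only [hG']
    have : -σ - 1 = -(σ + 1) := by ring
    rw [this]; ring
  have hslope : -σ * F 0 ^ (-(σ + 1)) * F' 0 < 0 := by
    have := Real.rpow_pos_of_pos (hFpos 0 h0) (-(σ + 1))
    have : 0 < σ * F 0 ^ (-(σ + 1)) * F' 0 := by positivity
    linarith
  refine ⟨hconc, hslope, ?_⟩
  -- tangent line bound via monotonicity of H
  set H : ℝ → ℝ := fun t => G 0 + t * G' 0 - G t with hH
  have hmono : MonotoneOn H D := by
    apply monotoneOn_of_hasDerivWithinAt_nonneg (convex_Ico 0 T)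
      (f' := fun t => G' 0 - G' t)
    · exact ContinuousOn.sub (continuousOn_const.add
        (continuousOn_id.mul continuousOn_const)) hGcont
    · intro x hx
      have hxD := hsub (hint ▸ hx)
      exact (((hasDerivAt_const x (G 0)).add
        ((hasDerivAt_id x).mul_const (G' 0))).sub (hGd x hxD)).hasDerivWithinAt.congr_deriv
        (by ring)
    · intro x hx
      have hxD := hsub (hint ▸ hx)
      have hxpos : 0 ≤ x := le_of_lt (hint ▸ hx : x ∈ Set.Ioo (0:ℝ) T).1
      have := hanti h0 hxD hxpos
      linarith
  intro t ht
  have := hmono h0 ht ht.1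
  have hH0 : H 0 = 0 := by simp [hH]
  rw [hH0] at this
  simp only [hH, hG] at this
  rw [← hG'0eq]
  linarith
end

section
/- Let ψ : [0, T*) → ℝ be a positive differentiable function satisfying ψ'(t) ≤ c₁ψ(t) + c₂(ψ(t)^{β₁} + ψ(t)^{β₂} + ψ(t)^{β₃} + ψ(t)^{β₄}) on [0,T*), where c₁, c₂ > 0 and βᵢ ≥ 1, and suppose ψ(t) → ∞ as t → T*⁻. Then ∫_{ψ(0)}^{∞} dy / (c₁ y + c₂(y^{β₁} + y^{β₂} + y^{β₃} + y^{β₄})) ≤ T*. -/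
open MeasureTheory Set Filter intervalIntegral

lemma aux_ode (ψ ψ' g : ℝ → ℝ) (Tstar : ℝ) (hT : 0 < Tstar)
    (hgpos : ∀ y, 0 < y → 0 < g y) (hgcont : ContinuousOn g (Set.Ioi 0))
    (hpos : ∀ t ∈ Set.Ico (0:ℝ) Tstar, 0 < ψ t)
    (hderiv : ∀ t ∈ Set.Ico (0:ℝ) Tstar, HasDerivAt ψ (ψ' t) t)
    (hineq : ∀ t ∈ Set.Ico (0:ℝ) Tstar, ψ' t ≤ g (ψ t))
    (hblow : Filter.Tendsto ψ (nhdsWithin Tstar (Set.Iio Tstar)) Filter.atTop) :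
    (∫ y in Set.Ioi (ψ 0), (g y)⁻¹) ≤ Tstar := by
  have hginv : ContinuousOn (fun y => (g y)⁻¹) (Set.Ioi 0) :=
    hgcont.inv₀ (fun y hy => (hgpos y hy).ne')
  have hψ0 : 0 < ψ 0 := hpos 0 ⟨le_refl 0, hT⟩
  by_cases hInt : IntegrableOn (fun y => (g y)⁻¹) (Set.Ioi (ψ 0)) volume
  · -- key : truncated integrals bounded
    have key : ∀ s ∈ Set.Ico (0:ℝ) Tstar, (∫ y in (ψ 0)..(ψ s), (g y)⁻¹) ≤ s := by
      intro s hs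
      set F : ℝ → ℝ := fun x => ∫ y in (ψ 0)..x, (g y)⁻¹ with hF
      have hFd : ∀ t ∈ Set.Ico (0:ℝ) Tstar, HasDerivAt F (g (ψ t))⁻¹ (ψ t) := by
        intro t ht
        have hψt : 0 < ψ t := hpos t ht
        have hsub : Set.uIcc (ψ 0) (ψ t) ⊆ Set.Ioi 0 := fun x hx =>
          lt_of_lt_of_le (lt_inf_iff.mpr ⟨hψ0, hψt⟩) hx.1
        have hii : IntervalIntegrable (fun y => (g y)⁻¹) volume (ψ 0) (ψ t) :=
          (hginv.mono hsub).intervalIntegrable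
        have hmeas := ContinuousOn.stronglyMeasurableAtFilter (μ := volume)
          isOpen_Ioi hginv (ψ t) hψt
        exact integral_hasDerivAt_right hii hmeas ((hginv (ψ t) hψt).continuousAt
          (isOpen_Ioi.mem_nhds hψt))
      set h : ℝ → ℝ := fun t => t - F (ψ t) with hh
      have hhd : ∀ t ∈ Set.Ico (0:ℝ) Tstar,
          HasDerivAt h (1 - (g (ψ t))⁻¹ * ψ' t) t := by
        intro t ht
        exact (hasDerivAt_id t).sub (((hFd t ht).comp t (hderiv t ht)))
      have hmono : MonotoneOn h (Set.Icc 0 s) := by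
        have hsubset : Set.Icc (0:ℝ) s ⊆ Set.Ico 0 Tstar := fun x hx =>
          ⟨hx.1, lt_of_le_of_lt hx.2 hs.2⟩
        apply monotoneOn_of_deriv_nonneg (convex_Icc 0 s)
        · exact fun x hx => (hhd x (hsubset hx)).continuousAt.continuousWithinAt
        · intro x hx
          rw [interior_Icc] at hx
          exact (hhd x (hsubset ⟨hx.1.le, hx.2.le⟩)).differentiableAt.differentiableWithinAt
        · intro x hx
          rw [interior_Icc] at hx
          have hx' := hsubset ⟨hx.1.le, hx.2.le⟩
          rw [(hhd x hx').deriv]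
          have hgψ : 0 < g (ψ x) := hgpos _ (hpos x hx')
          have : (g (ψ x))⁻¹ * ψ' x ≤ (g (ψ x))⁻¹ * g (ψ x) :=
            mul_le_mul_of_nonneg_left (hineq x hx') (inv_nonneg.mpr hgψ.le)
          rw [inv_mul_cancel₀ hgψ.ne'] at this
          linarith
      have h0 : h 0 = 0 := by simp [hh, hF]
      have := hmono (Set.left_mem_Icc.mpr hs.1) (Set.right_mem_Icc.mpr hs.1) hs.1
      rw [h0] at this
      simp only [hh] at this
      linarith
    have hlim : Tendsto (fun t => ∫ y in (ψ 0)..(ψ t), (g y)⁻¹)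
        (nhdsWithin Tstar (Set.Iio Tstar)) (nhds (∫ y in Set.Ioi (ψ 0), (g y)⁻¹)) :=
      intervalIntegral_tendsto_integral_Ioi (ψ 0) hInt hblow
    refine le_of_tendsto hlim ?_
    filter_upwards [Ioo_mem_nhdsLT_of_mem (Set.mem_Ioc.mpr ⟨hT, le_refl _⟩)] with t ht
    exact le_trans (key t ⟨ht.1.le, ht.2⟩) ht.2.le
  · rw [MeasureTheory.integral_undef hInt]
    exact hT.le

theorem stmt14 (ψ ψ' : ℝ → ℝ) (Tstar c₁ c₂ β₁ β₂ β₃ β₄ : ℝ)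
    (hc₁ : 0 < c₁) (hc₂ : 0 < c₂)
    (hβ₁ : 1 ≤ β₁) (hβ₂ : 1 ≤ β₂) (hβ₃ : 1 ≤ β₃) (hβ₄ : 1 ≤ β₄)
    (hTstar : 0 < Tstar)
    (hpos : ∀ t ∈ Set.Ico (0:ℝ) Tstar, 0 < ψ t)
    (hderiv : ∀ t ∈ Set.Ico (0:ℝ) Tstar, HasDerivAt ψ (ψ' t) t)
    (hineq : ∀ t ∈ Set.Ico (0:ℝ) Tstar,
      ψ' t ≤ c₁ * ψ t + c₂ * (ψ t ^ β₁ + ψ t ^ β₂ + ψ t ^ β₃ + ψ t ^ β₄))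
    (hblow : Filter.Tendsto ψ (nhdsWithin Tstar (Set.Iio Tstar)) Filter.atTop) :
    (∫ y in Set.Ioi (ψ 0), (c₁ * y + c₂ * (y ^ β₁ + y ^ β₂ + y ^ β₃ + y ^ β₄))⁻¹)
      ≤ Tstar := by
  apply aux_ode ψ ψ' (fun y => c₁ * y + c₂ * (y ^ β₁ + y ^ β₂ + y ^ β₃ + y ^ β₄))
    Tstar hTstar ?_ ?_ hpos hderiv hineq hblow
  · intro y hy
    have h1 := Real.rpow_pos_of_pos hy β₁
    have h2 := Real.rpow_pos_of_pos hy β₂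
    have h3 := Real.rpow_pos_of_pos hy β₃
    have h4 := Real.rpow_pos_of_pos hy β₄
    positivity
  · intro y hy
    have hrpow : ∀ β : ℝ, ContinuousWithinAt (fun x : ℝ => x ^ β) (Set.Ioi 0) y :=
      fun β => (Real.continuousAt_rpow_const y β (Or.inl (ne_of_gt hy))).continuousWithinAt
    exact (continuousWithinAt_const.mul continuousWithinAt_id).add
      (continuousWithinAt_const.mul (((hrpow β₁).add (hrpow β₂)).add (hrpow β₃) |>.add (hrpow β₄)))
end
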